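/- arXiv:1705.00822 — 2 statements merged into one kernel-verified Lean document; each statement's English description precedes it below -/
import Mathlib

section
/- Let Y ⊆ ℝ^d be closed convex, I finite, the constraints f_i, F̂_i : Y → ℝ continuous and convex for i ∈ I. Let γ > 0 and assume there exists y ∈ Y with f_i(y) < −γ for all i (so y is interior to X_{−γ} := {x ∈ Y : f_i(x) ≤ −γ ∀i}), and let y* minimize f over X_{−γ}. Set X := {x∈Y : f_i(x) ≤ 0 ∀i}, X̂ := {x∈Y : F̂_i(x) ≤ ε̂_i ∀i}, Δ̂_i(0) := max(0, sup{−F̂_i(x) : x ∈ X, f_i(x) = 0}), δ̂_i(z) := max(0, F̂_i(z) − f_i(z)), and Δ̂_0(y*|0) := max(0, sup_{x∈X}(f(x) − f(y*) − F̂(x) + F̂(y*))). Assume for all i ∈ I: (C1−) Δ̂_i(0) + δ̂_i(y) ≤ γ and (C2−) Δ̂_i(0) ≤ −ε̂_i. Then X̂ ⊆ X. If in addition (P−) δ̂_i(y*) ≤ γ + ε̂_i for all i and (M−) Δ̂_0(y*|0) ≤ t − t_1 with t ≥ t_1 ≥ 0, then every x̂ ∈ X̂ with F̂(x̂) ≤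 inf_{X̂} F̂ + t_1 satisfies f(x̂) ≤ f* + t + gap(γ), where f* := min_X f and gap(γ) := min_{X_{−γ}} f − f*. -/
/-!
Exact feasibility is a crossing argument: if `x ∈ X̂` violated some constraint, the segment from
the strictly feasible point `y` to `x` would meet the boundary of `X` at a point `z` with
`f i z = 0`. There (C1−) forces `F̂ i z > F̂ i y` and (C2−) forces `F̂ i z ≥ ε̂ i ≥ F̂ i x`,
which is impossible for a convex `F̂ i` at an interior point of the segment. Near-optimality then
follows by comparing `x̂` with `y*`, which lies in `X̂` by (P−).
-/

open Set

section Segment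

variable {E : Type*} [AddCommGroup E] [Module ℝ E] [TopologicalSpace E]
  [IsTopologicalAddGroup E] [ContinuousSMul ℝ E]

theorem Convex.exists_mem_openSegment_eq_zero {s : Set E} (hs : Convex ℝ s) {φ : E → ℝ}
    (hφ : ContinuousOn φ s) {x y : E} (hx : x ∈ s) (hy : y ∈ s) (hx0 : φ x < 0) (hy0 : 0 < φ y) :
    ∃ z ∈ openSegment ℝ x y, φ z = 0 := by
  have hmaps : MapsTo (AffineMap.lineMap x y) (Icc (0 : ℝ) 1) s := by
    rw [mapsTo_iff_image_subset, ← segment_eq_image_lineMap]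
    exact hs.segment_subset hx hy
  have hcont : ContinuousOn (φ ∘ AffineMap.lineMap x y) (Icc (0 : ℝ) 1) :=
    hφ.comp AffineMap.lineMap_continuous.continuousOn hmaps
  obtain ⟨θ, hθ, hθ0⟩ := intermediate_value_Ioo zero_le_one hcont
    ⟨by simpa using hx0, by simpa using hy0⟩
  exact ⟨_, openSegment_eq_image_lineMap ℝ x y ▸ mem_image_of_mem _ hθ, hθ0⟩

theorem Convex.exists_mem_openSegment_active {ι : Type*} [Fintype ι] {s : Set E}
    (hs : Convex ℝ s) {g : ι → E → ℝ} (hg : ∀ i, ContinuousOn (g i) s) {x y : E}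
    (hx : x ∈ s) (hy : y ∈ s) (hxg : ∀ i, g i x < 0) {i₀ : ι} (hy₀ : 0 < g i₀ y) :
    ∃ z ∈ openSegment ℝ x y, (∀ j, g j z ≤ 0) ∧ ∃ i, g i z = 0 := by
  have hne : (Finset.univ : Finset ι).Nonempty := ⟨i₀, Finset.mem_univ _⟩
  set φ : E → ℝ := fun z ↦ Finset.univ.sup' hne fun i ↦ g i z
  have hφ : ContinuousOn φ s := ContinuousOn.finset_sup'_apply hne fun i _ ↦ hg i
  have hφx : φ x < 0 := (Finset.sup'_lt_iff hne).2 fun i _ ↦ hxg i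
  have hφy : 0 < φ y := hy₀.trans_le (Finset.le_sup' (fun i ↦ g i y) (Finset.mem_univ i₀))
  obtain ⟨z, hz, hφz⟩ := hs.exists_mem_openSegment_eq_zero hφ hx hy hφx hφy
  obtain ⟨i, -, hi⟩ := Finset.exists_mem_eq_sup' hne fun i ↦ g i z
  exact ⟨z, hz, fun j ↦ hφz ▸ Finset.le_sup' (fun i ↦ g i z) (Finset.mem_univ j), i, hi ▸ hφz⟩

theorem Convex.sep_forall_le_subset_of_active {ι : Type*} [Fintype ι] {s : Set E}
    (hs : Convex ℝ s) {f F : ι → E → ℝ} {ε : ι → ℝ} (hfc : ∀ i, ContinuousOn (f i) s)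
    (hFv : ∀ i, ConvexOn ℝ s (F i)) {y : E} (hy : y ∈ s) (hyf : ∀ i, f i y < 0)
    (hactive : ∀ i, ∀ z ∈ s, (∀ j, f j z ≤ 0) → f i z = 0 → F i y < F i z ∧ ε i ≤ F i z) :
    {x ∈ s | ∀ i, F i x ≤ ε i} ⊆ {x ∈ s | ∀ i, f i x ≤ 0} := by
  rintro x ⟨hx, hxF⟩
  refine ⟨hx, fun i₀ ↦ not_lt.1 fun hi₀ ↦ ?_⟩
  obtain ⟨z, hz, hzX, i, hi⟩ := hs.exists_mem_openSegment_active hfc hy hx hyf hi₀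
  obtain ⟨hyz, hεz⟩ := hactive i z (hs.openSegment_subset hy hx hz) hzX hi
  exact ((hFv i).lt_right_of_left_lt hy hx hz hyz).not_ge ((hxF i).trans hεz)

end Segment

theorem le_add_of_le_csInf_add {α : Type*} {S : Set α} {f F : α → ℝ} {x x' : α} {t t₁ : ℝ}
    (hbdd : BddBelow (F '' S)) (hx' : x' ∈ S) (hx : F x ≤ sInf (F '' S) + t₁)
    (hdev : f x - f x' - (F x - F x') ≤ t - t₁) : f x ≤ f x' + t := by
  have := csInf_le hbdd (mem_image_of_mem F hx')
  linarith

theorem stmt_4_general {d : ℕ} {ι : Type*} [Fintype ι]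
    (Y : Set (EuclideanSpace ℝ (Fin d))) (hYcon : Convex ℝ Y)
    (hYcp : IsCompact Y)
    (f Fh : ι → EuclideanSpace ℝ (Fin d) → ℝ)
    (f0 F0 : EuclideanSpace ℝ (Fin d) → ℝ)
    (hfc : ∀ i, ContinuousOn (f i) Y)
    (hFv : ∀ i, ConvexOn ℝ Y (Fh i))
    (hF0 : ContinuousOn F0 Y)
    (εh : ι → ℝ) (γ : ℝ) (hγ : 0 < γ)
    (y : EuclideanSpace ℝ (Fin d)) (hy : y ∈ Y) (hyin : ∀ i, f i y < -γ)
    (ystar : EuclideanSpace ℝ (Fin d)) (hys : ystar ∈ {x ∈ Y | ∀ i, f i x ≤ -γ})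
    (xstar : EuclideanSpace ℝ (Fin d))
    (hC1 : ∀ i, max 0 (Fh i y - f i y) ≤ γ ∧
      ∀ x ∈ Y, (∀ j, f j x ≤ 0) → f i x = 0 → -Fh i x + max 0 (Fh i y - f i y) ≤ γ)
    (hC2 : ∀ i, 0 ≤ -εh i ∧ ∀ x ∈ Y, (∀ j, f j x ≤ 0) → f i x = 0 → -Fh i x ≤ -εh i) :
    {x ∈ Y | ∀ i, Fh i x ≤ εh i} ⊆ {x ∈ Y | ∀ i, f i x ≤ 0} ∧
    ∀ t t1 : ℝ, 0 ≤ t1 → t1 ≤ t →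
      (∀ i, max 0 (Fh i ystar - f i ystar) ≤ γ + εh i) →
      (∀ x ∈ Y, (∀ i, f i x ≤ 0) → f0 x - f0 ystar - (F0 x - F0 ystar) ≤ t - t1) →
      ∀ xh ∈ {x ∈ Y | ∀ i, Fh i x ≤ εh i},
        F0 xh ≤ sInf (F0 '' {x ∈ Y | ∀ i, Fh i x ≤ εh i}) + t1 →
        f0 xh ≤ f0 xstar + t + (f0 ystar - f0 xstar) := by
  have hX : {x ∈ Y | ∀ i, Fh i x ≤ εh i} ⊆ {x ∈ Y | ∀ i, f i x ≤ 0} := by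
    refine hYcon.sep_forall_le_subset_of_active hfc hFv hy (fun i ↦ by linarith [hyin i])
      fun i z hz hzX hzi ↦ ⟨?_, ?_⟩
    · linarith [(hC1 i).2 z hz hzX hzi, le_max_right 0 (Fh i y - f i y), hyin i]
    · linarith [(hC2 i).2 z hz hzX hzi]
  refine ⟨hX, fun t t1 _ _ hP hM xh hxh hnear ↦ ?_⟩
  have hysX : ystar ∈ {x ∈ Y | ∀ i, Fh i x ≤ εh i} :=
    ⟨hys.1, fun i ↦ by linarith [le_max_right 0 (Fh i ystar - f i ystar), hP i, hys.2 i]⟩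
  have hbdd : BddBelow (F0 '' {x ∈ Y | ∀ i, Fh i x ≤ εh i}) :=
    (hYcp.image_of_continuousOn hF0).bddBelow.mono (image_mono (sep_subset _ _))
  have hxhX := hX hxh
  have := le_add_of_le_csInf_add hbdd hysX hnear (hM xh hxhX.1 hxhX.2)
  linarith

/-- Optimality deviation with interior approximation of a strictly feasible convex
set: under (C1−),(C2−) exact feasibility `X̂ ⊆ X` holds; additionally under
(P−),(M−), near-solutions of the perturbed problem are `(t + gap(γ))`-near
solutions of the original problem, where `gap(γ) = min_{X_{-γ}} f - f*`. -/
theorem stmt_4 {d : ℕ} {ι : Type*} [Fintype ι]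
    (Y : Set (EuclideanSpace ℝ (Fin d))) (hYcl : IsClosed Y) (hYcon : Convex ℝ Y)
    (hYcp : IsCompact Y)
    (f Fh : ι → EuclideanSpace ℝ (Fin d) → ℝ)
    (f0 F0 : EuclideanSpace ℝ (Fin d) → ℝ)
    (hfc : ∀ i, ContinuousOn (f i) Y) (hFc : ∀ i, ContinuousOn (Fh i) Y)
    (hfv : ∀ i, ConvexOn ℝ Y (f i)) (hFv : ∀ i, ConvexOn ℝ Y (Fh i))
    (hf0 : ContinuousOn f0 Y) (hF0 : ContinuousOn F0 Y)
    (εh : ι → ℝ) (γ : ℝ) (hγ : 0 < γ)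
    (y : EuclideanSpace ℝ (Fin d)) (hy : y ∈ Y) (hyin : ∀ i, f i y < -γ)
    (ystar : EuclideanSpace ℝ (Fin d)) (hys : ystar ∈ {x ∈ Y | ∀ i, f i x ≤ -γ})
    (hysmin : ∀ z ∈ {x ∈ Y | ∀ i, f i x ≤ -γ}, f0 ystar ≤ f0 z)
    (xstar : EuclideanSpace ℝ (Fin d)) (hxs : xstar ∈ {x ∈ Y | ∀ i, f i x ≤ 0})
    (hxsmin : ∀ z ∈ {x ∈ Y | ∀ i, f i x ≤ 0}, f0 xstar ≤ f0 z)
    (hC1 : ∀ i, max 0 (Fh i y - f i y) ≤ γ ∧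
      ∀ x ∈ Y, (∀ j, f j x ≤ 0) → f i x = 0 → -Fh i x + max 0 (Fh i y - f i y) ≤ γ)
    (hC2 : ∀ i, 0 ≤ -εh i ∧ ∀ x ∈ Y, (∀ j, f j x ≤ 0) → f i x = 0 → -Fh i x ≤ -εh i) :
    {x ∈ Y | ∀ i, Fh i x ≤ εh i} ⊆ {x ∈ Y | ∀ i, f i x ≤ 0} ∧
    ∀ t t1 : ℝ, 0 ≤ t1 → t1 ≤ t →
      (∀ i, max 0 (Fh i ystar - f i ystar) ≤ γ + εh i) →
      (∀ x ∈ Y, (∀ i, f i x ≤ 0) → f0 x - f0 ystar - (F0 x - F0 ystar) ≤ t - t1) →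
      ∀ xh ∈ {x ∈ Y | ∀ i, Fh i x ≤ εh i},
        F0 xh ≤ sInf (F0 '' {x ∈ Y | ∀ i, Fh i x ≤ εh i}) + t1 →
        f0 xh ≤ f0 xstar + t + (f0 ystar - f0 xstar) :=
  stmt_4_general Y hYcon hYcp f Fh f0 F0 hfc hFv hF0 εh γ hγ y hy hyin ystar hys xstar hC1 hC2
end

section
/- Let Y ⊆ ℝ^d be closed convex, f_i : Y → ℝ continuous convex for i∈I (I finite), X := {x∈Y : f_i(x) ≤ 0 ∀i} compact, and suppose the Slater condition holds: there is x̄ ∈ Y with ε̊ := min_i(−f_i(x̄)) > 0. Let f : Y → ℝ be α-Hölder with constant L. Then for every γ ∈ (0, ε̊/2], with c := 2·D(X)/ε̊: 0 ≤ gap(γ) := min_{X_{−γ}} f − min_X f ≤ L (cγ)^α, where X_{−γ} := {x∈Y : f_i(x) ≤ −γ ∀i}. Moreover gap(γ) = 0 if some minimizer of f over X lies in X_{−γ}. -/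
/-!
Move a minimizer `x⋆` of `f` over `X` the fraction `t = γ/ε̊` of the way towards the Slater
point `x̄`. Since each `f_i` is convex, `f_i ≤ 0` at `x⋆` and `f_i ≤ -ε̊` at `x̄`, the new point
lies in `X_{-γ}`, and it is at distance `t ‖x̄ - x⋆‖ ≤ t D(X)` from `x⋆`. Hölder continuity bounds
the loss in the objective by `L (t D(X))^α ≤ L (cγ)^α`; the lower bound is just `X_{-γ} ⊆ X`.
-/

open Set

lemma HolderOnWith.of_dist_le {X Y : Type*} [PseudoMetricSpace X] [PseudoMetricSpace Y]
    {C r : NNReal} {f : X → Y} {s : Set X}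
    (h : ∀ x ∈ s, ∀ y ∈ s, dist (f x) (f y) ≤ C * dist x y ^ (r : ℝ)) :
    HolderOnWith C r f s := by
  intro x hx y hy
  rw [edist_dist, edist_dist, ENNReal.ofReal_rpow_of_nonneg dist_nonneg r.coe_nonneg,
    ← ENNReal.ofReal_coe_nnreal, ← ENNReal.ofReal_mul C.coe_nonneg]
  exact ENNReal.ofReal_le_ofReal (h x hx y hy)

lemma IsMinOn.csInf_image_eq {α : Type*} {f : α → ℝ} {s : Set α} {a : α} (ha : a ∈ s)
    (h : IsMinOn f s a) : sInf (f '' s) = f a :=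
  IsLeast.csInf_eq ⟨mem_image_of_mem f ha, forall_mem_image.2 h⟩

lemma sInf_image_sub_le_of_norm_sub_le {E : Type*} [SeminormedAddCommGroup E] {f : E → ℝ}
    {Y A : Set E} {L α δ : ℝ} (hL : 0 ≤ L) (hα : 0 ≤ α)
    (hHol : ∀ x ∈ Y, ∀ y ∈ Y, |f x - f y| ≤ L * ‖x - y‖ ^ α) (hAY : A ⊆ Y)
    (hA : BddBelow (f '' A)) {x z : E} (hx : x ∈ Y) (hz : z ∈ A) (hzx : ‖z - x‖ ≤ δ) :
    sInf (f '' A) - f x ≤ L * δ ^ α :=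
  calc sInf (f '' A) - f x ≤ f z - f x := by
        gcongr
        exact csInf_le hA (mem_image_of_mem f hz)
    _ ≤ L * ‖z - x‖ ^ α := (le_abs_self _).trans (hHol z (hAY hz) x hx)
    _ ≤ L * δ ^ α := by gcongr

section ConstraintSet

variable {E ι : Type*} {Y : Set E} {g : ι → E → ℝ}

/-- The paper's `X_c`, so that `X = X_0`. -/
def constraintSet (Y : Set E) (g : ι → E → ℝ) (c : ℝ) : Set E := {x ∈ Y | ∀ i, g i x ≤ c}

lemma constraintSet_subset_constraintSet {c c' : ℝ} (h : c ≤ c') :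
    constraintSet Y g c ⊆ constraintSet Y g c' :=
  fun _ hx => ⟨hx.1, fun i => (hx.2 i).trans h⟩

lemma mem_constraintSet_neg_iInf [Finite ι] {x : E} (hx : x ∈ Y) :
    x ∈ constraintSet Y g (-⨅ i, -g i x) :=
  ⟨hx, fun i => le_neg_of_le_neg (ciInf_le (Finite.bddBelow_range _) i)⟩

variable [AddCommGroup E] [Module ℝ E]

lemma ConvexOn.le_neg_mul_of_le_zero_of_le_neg {h : E → ℝ} (hh : ConvexOn ℝ Y h) {x y : E}
    (hx : x ∈ Y) (hy : y ∈ Y) (hhx : h x ≤ 0) {ε : ℝ} (hhy : h y ≤ -ε) {t : ℝ}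
    (ht0 : 0 ≤ t) (ht1 : t ≤ 1) : h ((1 - t) • x + t • y) ≤ -(t * ε) :=
  calc h ((1 - t) • x + t • y) ≤ (1 - t) * h x + t * h y :=
        hh.2 hx hy (sub_nonneg.2 ht1) ht0 (sub_add_cancel 1 t)
    _ ≤ -(t * ε) := by nlinarith

lemma smul_add_smul_mem_constraintSet (hY : Convex ℝ Y) (hg : ∀ i, ConvexOn ℝ Y (g i))
    {x y : E} (hx : x ∈ constraintSet Y g 0) {ε : ℝ} (hy : y ∈ constraintSet Y g (-ε))
    {t : ℝ} (ht0 : 0 ≤ t) (ht1 : t ≤ 1) :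
    (1 - t) • x + t • y ∈ constraintSet Y g (-(t * ε)) :=
  ⟨hY hx.1 hy.1 (sub_nonneg.2 ht1) ht0 (sub_add_cancel 1 t), fun i =>
    (hg i).le_neg_mul_of_le_zero_of_le_neg hx.1 hy.1 (hx.2 i) (hy.2 i) ht0 ht1⟩

end ConstraintSet

lemma exists_mem_constraintSet_norm_sub_le {E ι : Type*} [NormedAddCommGroup E] [NormedSpace ℝ E]
    {Y : Set E} {g : ι → E → ℝ} (hY : Convex ℝ Y) (hg : ∀ i, ConvexOn ℝ Y (g i))
    {x y : E} (hx : x ∈ constraintSet Y g 0) {ε : ℝ} (hε : 0 < ε)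
    (hy : y ∈ constraintSet Y g (-ε)) {γ : ℝ} (hγ0 : 0 ≤ γ) (hγε : γ ≤ ε) :
    ∃ z ∈ constraintSet Y g (-γ), ‖z - x‖ ≤ γ / ε * ‖y - x‖ := by
  have ht0 : 0 ≤ γ / ε := div_nonneg hγ0 hε.le
  refine ⟨(1 - γ / ε) • x + (γ / ε) • y, ?_, le_of_eq ?_⟩
  · have hmem := smul_add_smul_mem_constraintSet hY hg hx hy ht0 ((div_le_one hε).2 hγε)
    rwa [div_mul_cancel₀ γ hε.ne'] at hmem
  · rw [show (1 - γ / ε) • x + (γ / ε) • y - x = (γ / ε) • (y - x) by module, norm_smul,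
      Real.norm_of_nonneg ht0]

theorem stmt_8_general {d : ℕ} {ι : Type*} [Fintype ι]
    (Y : Set (EuclideanSpace ℝ (Fin d))) (hYcon : Convex ℝ Y)
    (f : EuclideanSpace ℝ (Fin d) → ℝ) (fI : ι → EuclideanSpace ℝ (Fin d) → ℝ)
    (hfIv : ∀ i, ConvexOn ℝ Y (fI i))
    (hX : IsCompact {x ∈ Y | ∀ i, fI i x ≤ 0})
    (xbar : EuclideanSpace ℝ (Fin d)) (hxbar : xbar ∈ Y)
    (hslater : 0 < ⨅ i, -fI i xbar)
    (L α : ℝ) (hL : 0 ≤ L) (hα0 : 0 < α)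
    (hHol : ∀ x ∈ Y, ∀ y ∈ Y, |f x - f y| ≤ L * ‖x - y‖ ^ α)
    (γ : ℝ) (hγ0 : 0 < γ) (hγ : γ ≤ (⨅ i, -fI i xbar) / 2) :
    0 ≤ sInf (f '' {x ∈ Y | ∀ i, fI i x ≤ -γ}) - sInf (f '' {x ∈ Y | ∀ i, fI i x ≤ 0}) ∧
    sInf (f '' {x ∈ Y | ∀ i, fI i x ≤ -γ}) - sInf (f '' {x ∈ Y | ∀ i, fI i x ≤ 0}) ≤
      L * ((2 * Metric.diam {x ∈ Y | ∀ i, fI i x ≤ 0} / ⨅ i, -fI i xbar) * γ) ^ α ∧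
    ((∃ xm ∈ {x ∈ Y | ∀ i, fI i x ≤ 0},
        (∀ z ∈ {x ∈ Y | ∀ i, fI i x ≤ 0}, f xm ≤ f z) ∧ ∀ i, fI i xm ≤ -γ) →
      sInf (f '' {x ∈ Y | ∀ i, fI i x ≤ -γ}) = sInf (f '' {x ∈ Y | ∀ i, fI i x ≤ 0})) := by
  set ε := ⨅ i, -fI i xbar
  set X := {x ∈ Y | ∀ i, fI i x ≤ 0}
  set Xγ := {x ∈ Y | ∀ i, fI i x ≤ -γ}
  have hXγX : Xγ ⊆ X := constraintSet_subset_constraintSet (neg_nonpos.2 hγ0.le)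
  have hxbarε : xbar ∈ constraintSet Y fI (-ε) := mem_constraintSet_neg_iInf hxbar
  have hxbarX : xbar ∈ X := constraintSet_subset_constraintSet (neg_nonpos.2 hslater.le) hxbarε
  have hfY : ContinuousOn f Y :=
    (HolderOnWith.of_dist_le (C := ⟨L, hL⟩) (r := ⟨α, hα0.le⟩) fun x hx y hy => by
      rw [Real.dist_eq, dist_eq_norm]; exact hHol x hx y hy).continuousOn hα0
  obtain ⟨xs, hxsX, hxsmin⟩ := hX.exists_isMinOn ⟨xbar, hxbarX⟩ (hfY.mono fun _ hx => hx.1)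
  have hbdd : BddBelow (f '' Xγ) :=
    (hX.bddBelow_image (hfY.mono fun _ hx => hx.1)).mono (image_mono hXγX)
  have hlower : f xs ≤ sInf (f '' Xγ) :=
    le_csInf (Nonempty.image f ⟨xbar, constraintSet_subset_constraintSet (by linarith) hxbarε⟩)
      (forall_mem_image.2 fun _ hz => hxsmin (hXγX hz))
  rw [hxsmin.csInf_image_eq hxsX]
  refine ⟨sub_nonneg.2 hlower, ?_, ?_⟩
  · obtain ⟨z, hzXγ, hz⟩ := exists_mem_constraintSet_norm_sub_le hYcon hfIv hxsX hslater hxbarε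
      hγ0.le (by linarith)
    have hdist : ‖z - xs‖ ≤ 2 * Metric.diam X / ε * γ :=
      calc ‖z - xs‖ ≤ γ / ε * ‖xbar - xs‖ := hz
        _ ≤ γ / ε * Metric.diam X := by
          gcongr
          exact dist_eq_norm xbar xs ▸ Metric.dist_le_diam_of_mem hX.isBounded hxbarX hxsX
        _ ≤ 2 * (γ / ε * Metric.diam X) := le_mul_of_one_le_left (by positivity) one_le_two
        _ = 2 * Metric.diam X / ε * γ := by ring
    exact sInf_image_sub_le_of_norm_sub_le hL hα0.le hHol (fun _ hx => hx.1) hbdd hxsX.1 hzXγ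
      hdist
  · rintro ⟨xm, hxmX, hxmmin, hxmγ⟩
    exact le_antisymm ((csInf_le hbdd (mem_image_of_mem f ⟨hxmX.1, hxmγ⟩)).trans
      (hxmmin xs hxsX)) hlower

/-- Interior optimality error under the Slater condition: for `γ ∈ (0, ε̊/2]` and
`c = 2·diam X / ε̊`, one has `0 ≤ gap(γ) := min_{X_{-γ}} f − min_X f ≤ L (cγ)^α`,
and `gap(γ) = 0` if some minimizer of `f` over `X` lies in `X_{-γ}`. -/
theorem stmt_8 {d : ℕ} {ι : Type*} [Fintype ι] [Nonempty ι]
    (Y : Set (EuclideanSpace ℝ (Fin d))) (hYcl : IsClosed Y) (hYcon : Convex ℝ Y)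
    (f : EuclideanSpace ℝ (Fin d) → ℝ) (fI : ι → EuclideanSpace ℝ (Fin d) → ℝ)
    (hfIc : ∀ i, ContinuousOn (fI i) Y) (hfIv : ∀ i, ConvexOn ℝ Y (fI i))
    (hX : IsCompact {x ∈ Y | ∀ i, fI i x ≤ 0})
    (xbar : EuclideanSpace ℝ (Fin d)) (hxbar : xbar ∈ Y)
    (hslater : 0 < ⨅ i, -fI i xbar)
    (L α : ℝ) (hL : 0 ≤ L) (hα0 : 0 < α) (hα1 : α ≤ 1)
    (hHol : ∀ x ∈ Y, ∀ y ∈ Y, |f x - f y| ≤ L * ‖x - y‖ ^ α)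
    (γ : ℝ) (hγ0 : 0 < γ) (hγ : γ ≤ (⨅ i, -fI i xbar) / 2) :
    0 ≤ sInf (f '' {x ∈ Y | ∀ i, fI i x ≤ -γ}) - sInf (f '' {x ∈ Y | ∀ i, fI i x ≤ 0}) ∧
    sInf (f '' {x ∈ Y | ∀ i, fI i x ≤ -γ}) - sInf (f '' {x ∈ Y | ∀ i, fI i x ≤ 0}) ≤
      L * ((2 * Metric.diam {x ∈ Y | ∀ i, fI i x ≤ 0} / ⨅ i, -fI i xbar) * γ) ^ α ∧
    ((∃ xm ∈ {x ∈ Y | ∀ i, fI i x ≤ 0},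
        (∀ z ∈ {x ∈ Y | ∀ i, fI i x ≤ 0}, f xm ≤ f z) ∧ ∀ i, fI i xm ≤ -γ) →
      sInf (f '' {x ∈ Y | ∀ i, fI i x ≤ -γ}) = sInf (f '' {x ∈ Y | ∀ i, fI i x ≤ 0})) :=
  stmt_8_general Y hYcon f fI hfIv hX xbar hxbar hslater L α hL hα0 hHol γ hγ0 hγ
end
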